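/- arXiv:1210.5755 — 2 statements merged into one kernel-verified Lean document; each statement's English description precedes it below -/
import Mathlib

section
/- For fixed β ∈ (0,1], the ratio b̃/ã (with ã > 0) is strictly increasing in μ for μ ≥ 0; in particular the asymptotic SCN under correlated noise strictly exceeds the Marchenko–Pastur SCN b/a = (1+√β)²/(1-√β)² whenever μ > 0. -/
set_option maxHeartbeats 1600000 in
/-- For fixed `β ∈ (0,1)`, the ratio `b̃(μ)/ã(μ)` is strictly increasing in `μ ≥ 0`
(assuming `ã(μ) > 0` there); in particular it strictly exceeds the Marchenko–Pastur SCN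
`(1+√β)²/(1-√β)²` whenever `μ > 0`. -/
theorem stmt_3 (β : ℝ) (hβ0 : 0 < β) (hβ1 : β < 1)
    (atil btil : ℝ → ℝ)
    (ha : ∀ μ, atil μ = 1 + β + 2 * μ * β - 2 * Real.sqrt β * Real.sqrt ((1 + μ) * (1 + μ * β)))
    (hb : ∀ μ, btil μ = 1 + β + 2 * μ * β + 2 * Real.sqrt β * Real.sqrt ((1 + μ) * (1 + μ * β)))
    (hpos : ∀ μ ≥ (0 : ℝ), 0 < atil μ) :
    StrictMonoOn (fun μ => btil μ / atil μ) (Set.Ici 0) ∧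
      ∀ μ > (0 : ℝ),
        (1 + Real.sqrt β) ^ 2 / (1 - Real.sqrt β) ^ 2 < btil μ / atil μ := by
  have hsb : Real.sqrt β ^ 2 = β := Real.sq_sqrt hβ0.le
  have hsb0 : 0 < Real.sqrt β := Real.sqrt_pos.2 hβ0
  have hmono : StrictMonoOn (fun μ => btil μ / atil μ) (Set.Ici 0) := by
    intro μ₁ hμ₁ μ₂ hμ₂ h12
    simp only [Set.mem_Ici] at hμ₁ hμ₂
    set s₁ := 2 * Real.sqrt β * Real.sqrt ((1 + μ₁) * (1 + μ₁ * β)) with hs₁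
    set s₂ := 2 * Real.sqrt β * Real.sqrt ((1 + μ₂) * (1 + μ₂ * β)) with hs₂
    have hP₁ : (0:ℝ) < (1 + μ₁) * (1 + μ₁ * β) := by positivity
    have hP₂ : (0:ℝ) < (1 + μ₂) * (1 + μ₂ * β) := by positivity
    have hs₁pos : 0 < s₁ := by
      have := Real.sqrt_pos.2 hP₁; positivity
    have hs₂pos : 0 < s₂ := by
      have := Real.sqrt_pos.2 hP₂; positivity
    have hs₁sq : s₁ ^ 2 = 4 * β * ((1 + μ₁) * (1 + μ₁ * β)) := by
      rw [hs₁, mul_pow, mul_pow, hsb, Real.sq_sqrt hP₁.le]; ring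
    have hs₂sq : s₂ ^ 2 = 4 * β * ((1 + μ₂) * (1 + μ₂ * β)) := by
      rw [hs₂, mul_pow, mul_pow, hsb, Real.sq_sqrt hP₂.le]; ring
    have ha₁ : atil μ₁ = 1 + β + 2 * μ₁ * β - s₁ := ha μ₁
    have ha₂ : atil μ₂ = 1 + β + 2 * μ₂ * β - s₂ := ha μ₂
    have hb₁ : btil μ₁ = 1 + β + 2 * μ₁ * β + s₁ := hb μ₁
    have hb₂ : btil μ₂ = 1 + β + 2 * μ₂ * β + s₂ := hb μ₂
    have hA₁ : 0 < atil μ₁ := hpos μ₁ hμ₁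
    have hA₂ : 0 < atil μ₂ := hpos μ₂ hμ₂
    have ht₁ : 0 < 1 + β + 2 * μ₁ * β := by nlinarith
    have ht₂ : 0 < 1 + β + 2 * μ₂ * β := by nlinarith
    -- key: s₁ * t₂ < s₂ * t₁
    have hkey : s₁ * (1 + β + 2 * μ₂ * β) < s₂ * (1 + β + 2 * μ₁ * β) := by
      have h1 : s₁ < 1 + β + 2 * μ₁ * β := by nlinarith
      have h2 : s₂ < 1 + β + 2 * μ₂ * β := by nlinarith
      have hsq : (s₁ * (1 + β + 2 * μ₂ * β)) ^ 2 < (s₂ * (1 + β + 2 * μ₁ * β)) ^ 2 := by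
        have e1 : (s₁ * (1 + β + 2 * μ₂ * β)) ^ 2 = s₁ ^ 2 * (1 + β + 2 * μ₂ * β) ^ 2 := by ring
        have e2 : (s₂ * (1 + β + 2 * μ₁ * β)) ^ 2 = s₂ ^ 2 * (1 + β + 2 * μ₁ * β) ^ 2 := by ring
        rw [e1, e2, hs₁sq, hs₂sq]
        have key : 4 * β * ((1 + μ₂) * (1 + μ₂ * β)) * (1 + β + 2 * μ₁ * β) ^ 2
            - 4 * β * ((1 + μ₁) * (1 + μ₁ * β)) * (1 + β + 2 * μ₂ * β) ^ 2
            = 4 * β * (1 - β) ^ 2 * ((μ₂ - μ₁) * (1 + β + β * (μ₁ + μ₂))) := by ring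
        have hd1 : (0:ℝ) < μ₂ - μ₁ := sub_pos.2 h12
        have hd2 : (0:ℝ) < 1 + β + β * (μ₁ + μ₂) := by nlinarith
        have hd3 : (0:ℝ) < 1 - β := sub_pos.2 hβ1
        have hdpos : 0 < 4 * β * (1 - β) ^ 2 * ((μ₂ - μ₁) * (1 + β + β * (μ₁ + μ₂))) := by
          positivity
        linarith [key, hdpos]
      have hnn : 0 ≤ s₂ * (1 + β + 2 * μ₁ * β) := by positivity
      exact lt_of_pow_lt_pow_left₀ 2 hnn hsq
    show btil μ₁ / atil μ₁ < btil μ₂ / atil μ₂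
    rw [div_lt_div_iff₀ hA₁ hA₂, hb₁, hb₂, ha₁, ha₂]
    nlinarith [hkey]
  refine ⟨hmono, fun μ hμ => ?_⟩
  have h0 : atil 0 = (1 - Real.sqrt β) ^ 2 := by
    rw [ha 0]
    simp only [mul_zero, zero_mul, add_zero, mul_one, one_mul]
    rw [Real.sqrt_one]
    nlinarith
  have h0' : btil 0 = (1 + Real.sqrt β) ^ 2 := by
    rw [hb 0]
    simp only [mul_zero, zero_mul, add_zero, mul_one, one_mul]
    rw [Real.sqrt_one]
    nlinarith
  have := hmono (Set.self_mem_Ici) (Set.mem_Ici.2 hμ.le) hμ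
  simpa [h0, h0'] using this
end

section
/- The tilted semicircular density f_Θ(λ) = (1/(2πμλ²))·√((λ/σ₁ - 1)(1 - λ/σ₂)) on [σ₁, σ₂], with μ = (√σ₂ - √σ₁)²/(4σ₁σ₂), integrates to 1. -/
/-! Clearing the constants, the claim is `∫ x in a..b, √((x - a) * (b - x)) / x ^ 2 =
π * (√b - √a) ^ 2 / (2 * √a * √b)`. The integrand has the elementary antiderivative
`c * arcsin (((a + b) * x - 2 * a * b) / ((b - a) * x)) - arcsin ((2 * x - (a + b)) / (b - a))
- √((x - a) * (b - x)) / x` with `c = (a + b) / (2 * √a * √b)`: both arcsine arguments run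
from `-1` to `1` over `[a, b]` and the square root vanishes at the endpoints, so the integral
is `π * (c - 1)`. -/

open Real Set

theorem HasDerivAt.arcsin {f : ℝ → ℝ} {f' x : ℝ} (hf : HasDerivAt f f' x) (h : |f x| < 1) :
    HasDerivAt (fun y => arcsin (f y)) (f' / √(1 - f x ^ 2)) x := by
  have ⟨h₁, h₂⟩ := abs_lt.1 h
  rw [div_eq_inv_mul, ← one_div]
  exact (hasDerivAt_arcsin h₁.ne' h₂.ne).comp x hf

theorem sqrt_one_sub_div_sq {p q r : ℝ} (hq : 0 < q) (hr : 0 ≤ r) (h : q ^ 2 - p ^ 2 = r ^ 2) :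
    √(1 - (p / q) ^ 2) = r / q := by
  rw [show 1 - (p / q) ^ 2 = (r / q) ^ 2 by field_simp; linarith, sqrt_sq (by positivity)]

noncomputable def tiltedAntideriv (a b x : ℝ) : ℝ :=
  (a + b) / (2 * √a * √b) * arcsin (((a + b) * x - 2 * a * b) / ((b - a) * x))
    - arcsin ((2 * x - (a + b)) / (b - a)) - √((x - a) * (b - x)) / x

section
variable {a b x : ℝ}

theorem hasDerivAt_sqrt_div (hR : 0 < (x - a) * (b - x)) (hx : x ≠ 0) :
    HasDerivAt (fun y => √((y - a) * (b - y)) / y)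
      ((a + b - 2 * x) / (2 * √((x - a) * (b - x)) * x) - √((x - a) * (b - x)) / x ^ 2) x := by
  have hR' : HasDerivAt (fun y => (y - a) * (b - y)) (a + b - 2 * x) x :=
    (((hasDerivAt_id' x).sub_const a).mul ((hasDerivAt_id' x).const_sub b)).congr_deriv (by ring)
  refine ((hR'.sqrt hR.ne').div (hasDerivAt_id' x) hx).congr_deriv ?_
  have := (sqrt_pos.2 hR).ne'
  field_simp

theorem hasDerivAt_arcsin_affine (hx : x ∈ Ioo a b) :
    HasDerivAt (fun y => arcsin ((2 * y - (a + b)) / (b - a))) (1 / √((x - a) * (b - x))) x := by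
  obtain ⟨hax, hxb⟩ := hx
  have hba : 0 < b - a := by linarith
  have hu : HasDerivAt (fun y => (2 * y - (a + b)) / (b - a)) (2 / (b - a)) x :=
    ((((hasDerivAt_id' x).const_mul 2).sub_const (a + b)).div_const (b - a)).congr_deriv (by ring)
  have hlt : |(2 * x - (a + b)) / (b - a)| < 1 := by
    rw [abs_div, abs_of_pos hba, div_lt_one hba, abs_lt]; constructor <;> linarith
  have hR : 0 < (x - a) * (b - x) := mul_pos (by linarith) (by linarith)
  refine (hu.arcsin hlt).congr_deriv ?_
  rw [sqrt_one_sub_div_sq (r := 2 * √((x - a) * (b - x))) hba (by positivity)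
    (by rw [mul_pow, sq_sqrt hR.le]; ring)]
  field_simp

theorem hasDerivAt_arcsin_moebius (ha : 0 < a) (hx : x ∈ Ioo a b) :
    HasDerivAt (fun y => arcsin (((a + b) * y - 2 * a * b) / ((b - a) * y)))
      (√a * √b / (√((x - a) * (b - x)) * x)) x := by
  obtain ⟨hax, hxb⟩ := hx
  have hb : 0 < b := by linarith
  have hx0 : 0 < x := ha.trans hax
  have hq : 0 < (b - a) * x := mul_pos (by linarith) hx0
  have hu : HasDerivAt (fun y => ((a + b) * y - 2 * a * b) / ((b - a) * y))
      (2 * a * b / ((b - a) * x ^ 2)) x := by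
    refine ((((hasDerivAt_id' x).const_mul (a + b)).sub_const (2 * a * b)).div
      ((hasDerivAt_id' x).const_mul (b - a)) hq.ne').congr_deriv ?_
    field_simp
    ring
  have hlt : |((a + b) * x - 2 * a * b) / ((b - a) * x)| < 1 := by
    rw [abs_div, abs_of_pos hq, div_lt_one hq, abs_lt]; constructor <;> nlinarith
  have hR : 0 < (x - a) * (b - x) := mul_pos (by linarith) (by linarith)
  refine (hu.arcsin hlt).congr_deriv ?_
  rw [sqrt_one_sub_div_sq (r := 2 * √a * √b * √((x - a) * (b - x))) hq (by positivity)
    (by simp only [mul_pow, sq_sqrt hR.le, sq_sqrt ha.le, sq_sqrt hb.le]; ring)]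
  have := (sqrt_pos.2 hR).ne'
  have := (sqrt_pos.2 ha).ne'
  have := (sqrt_pos.2 hb).ne'
  have := (sub_pos.2 (hax.trans hxb)).ne'
  field_simp
  rw [sq_sqrt ha.le, sq_sqrt hb.le]

theorem hasDerivAt_tiltedAntideriv (ha : 0 < a) (hx : x ∈ Ioo a b) :
    HasDerivAt (tiltedAntideriv a b) (√((x - a) * (b - x)) / x ^ 2) x := by
  have hx0 : 0 < x := ha.trans hx.1
  have hR : 0 < (x - a) * (b - x) := mul_pos (by linarith [hx.1]) (by linarith [hx.2])
  refine ((((hasDerivAt_arcsin_moebius ha hx).const_mul ((a + b) / (2 * √a * √b))).sub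
    (hasDerivAt_arcsin_affine hx)).sub (hasDerivAt_sqrt_div hR hx0.ne')).congr_deriv ?_
  have := (sqrt_pos.2 hR).ne'
  have := (sqrt_pos.2 ha).ne'
  have := (sqrt_pos.2 (ha.trans (hx.1.trans hx.2))).ne'
  field_simp
  ring

theorem continuousOn_tiltedAntideriv (ha : 0 < a) (hab : a < b) :
    ContinuousOn (tiltedAntideriv a b) (Icc a b) := by
  have hx0 : ∀ x ∈ Icc a b, x ≠ 0 := fun x hx => (ha.trans_le hx.1).ne'
  have hq : ∀ x ∈ Icc a b, (b - a) * x ≠ 0 := fun x hx =>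
    mul_ne_zero (sub_pos.2 hab).ne' (hx0 x hx)
  unfold tiltedAntideriv
  fun_prop (disch := assumption)

theorem tiltedAntideriv_right_sub_left (ha : 0 < a) (hab : a < b) :
    tiltedAntideriv a b b - tiltedAntideriv a b a = π * (√b - √a) ^ 2 / (2 * √a * √b) := by
  have hb : 0 < b := ha.trans hab
  have hba : b - a ≠ 0 := (sub_pos.2 hab).ne'
  have h₁ : ((a + b) * b - 2 * a * b) / ((b - a) * b) = 1 := by
    rw [div_eq_one_iff_eq (mul_ne_zero hba hb.ne')]; ring
  have h₂ : (2 * b - (a + b)) / (b - a) = 1 := by rw [div_eq_one_iff_eq hba]; ring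
  have h₃ : ((a + b) * a - 2 * a * b) / ((b - a) * a) = -1 := by
    rw [div_eq_iff (mul_ne_zero hba ha.ne')]; ring
  have h₄ : (2 * a - (a + b)) / (b - a) = -1 := by rw [div_eq_iff hba]; ring
  simp only [tiltedAntideriv, h₁, h₂, h₃, h₄, arcsin_one, arcsin_neg_one, sub_self, mul_zero,
    zero_mul, sqrt_zero, zero_div]
  have := (sqrt_pos.2 ha).ne'
  have := (sqrt_pos.2 hb).ne'
  field_simp
  rw [sub_sq, sq_sqrt ha.le, sq_sqrt hb.le]
  ring

theorem integral_sqrt_mul_div_sq (ha : 0 < a) (hab : a < b) :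
    ∫ x in a..b, √((x - a) * (b - x)) / x ^ 2 = π * (√b - √a) ^ 2 / (2 * √a * √b) := by
  have hint :
      IntervalIntegrable (fun x => √((x - a) * (b - x)) / x ^ 2) MeasureTheory.volume a b := by
    refine ContinuousOn.intervalIntegrable ?_
    rw [uIcc_of_le hab.le]
    fun_prop (disch := intro x hx; have := (ha.trans_le hx.1).ne'; positivity)
  rw [intervalIntegral.integral_eq_sub_of_hasDerivAt_of_le hab.le
    (continuousOn_tiltedAntideriv ha hab) (fun x hx => hasDerivAt_tiltedAntideriv ha hx) hint,
    tiltedAntideriv_right_sub_left ha hab]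

end

/-- The tilted semicircular density integrates to `1`. -/
theorem stmt_6 (σ₁ σ₂ μ : ℝ) (h1 : 0 < σ₁) (h12 : σ₁ < σ₂)
    (hμ : μ = (Real.sqrt σ₂ - Real.sqrt σ₁) ^ 2 / (4 * σ₁ * σ₂)) :
    ∫ x in σ₁..σ₂, 1 / (2 * π * μ * x ^ 2) * Real.sqrt ((x / σ₁ - 1) * (1 - x / σ₂)) = 1 := by
  have h2 : 0 < σ₂ := h1.trans h12
  have hσ : (0 : ℝ) < σ₁ * σ₂ := mul_pos h1 h2
  have hgap : √σ₂ - √σ₁ ≠ 0 := (sub_pos.2 (sqrt_lt_sqrt h1.le h12)).ne'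
  have hintegrand : (fun x => 1 / (2 * π * μ * x ^ 2) * √((x / σ₁ - 1) * (1 - x / σ₂)))
      = fun x => 1 / (2 * π * μ * √σ₁ * √σ₂) * (√((x - σ₁) * (σ₂ - x)) / x ^ 2) := by
    funext x
    rw [show (x / σ₁ - 1) * (1 - x / σ₂) = (x - σ₁) * (σ₂ - x) / (σ₁ * σ₂) by field_simp,
      sqrt_div' _ hσ.le, sqrt_mul h1.le]
    ring
  rw [hintegrand, intervalIntegral.integral_const_mul, integral_sqrt_mul_div_sq h1 h12, hμ]
  have := (sqrt_pos.2 h1).ne'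
  have := (sqrt_pos.2 h2).ne'
  field_simp
  rw [sq_sqrt h1.le, sq_sqrt h2.le]
  ring
end
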